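/- The 3-dimensional ℂ-algebras N_{a,0} (products: e₁e₁ = e₂, e₁e₃ = e₁, e₃e₁ = -e₁) and N_{b,0} (products: e₁e₁ = e₂, e₁e₃ = e₃, e₃e₁ = -e₃) are not isomorphic, since (N_{a,0}²)² ≠ 0 while (N_{b,0}²)² = 0. -/
import Mathlib


/-- Multiplication of N_{a,0}: e₁e₁ = e₂, e₁e₃ = e₁, e₃e₁ = -e₁. -/
def mulNa0 (v w : Fin 3 → ℂ) : Fin 3 → ℂ := ![v 0 * w 2 - v 2 * w 0, v 0 * w 0, 0]

/-- Multiplication of N_{b,0}: e₁e₁ = e₂, e₁e₃ = e₃, e₃e₁ = -e₃. -/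
def mulNb0 (v w : Fin 3 → ℂ) : Fin 3 → ℂ := ![0, v 0 * w 0, v 0 * w 2 - v 2 * w 0]

/-- A², the span of all products of two elements. -/
noncomputable def sqSpan (m : (Fin 3 → ℂ) → (Fin 3 → ℂ) → (Fin 3 → ℂ)) : Submodule ℂ (Fin 3 → ℂ) :=
  Submodule.span ℂ {z | ∃ x y, z = m x y}

/-- (A²)², the span of products of two elements of A². -/
noncomputable def sqsq (m : (Fin 3 → ℂ) → (Fin 3 → ℂ) → (Fin 3 → ℂ)) : Submodule ℂ (Fin 3 → ℂ) :=
  Submodule.span ℂ {z | ∃ x ∈ sqSpan m, ∃ y ∈ sqSpan m, z = m x y}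

lemma sqSpan_b_le : sqSpan mulNb0 ≤ LinearMap.ker ((LinearMap.proj 0 : (Fin 3 → ℂ) →ₗ[ℂ] ℂ)) := by
  apply Submodule.span_le.2
  rintro z ⟨x, y, rfl⟩
  simp [mulNb0]

/-- (N_{a,0}²)² ≠ 0 while (N_{b,0}²)² = 0, and N_{a,0} ≇ N_{b,0}. -/
theorem stmt_10 :
    sqsq mulNa0 ≠ ⊥ ∧ sqsq mulNb0 = ⊥ ∧
    ¬ ∃ f : (Fin 3 → ℂ) ≃ₗ[ℂ] (Fin 3 → ℂ),
        ∀ x y, f (mulNa0 x y) = mulNb0 (f x) (f y) := by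
  have he1 : (![1,0,0] : Fin 3 → ℂ) ∈ sqSpan mulNa0 := by
    apply Submodule.subset_span
    refine ⟨![1,0,0], ![0,0,1], ?_⟩
    funext i; fin_cases i <;> simp [mulNa0]
  refine ⟨?_, ?_, ?_⟩
  · intro h
    have hm : (![0,1,0] : Fin 3 → ℂ) ∈ sqsq mulNa0 := by
      apply Submodule.subset_span
      refine ⟨![1,0,0], he1, ![1,0,0], he1, ?_⟩
      funext i; fin_cases i <;> simp [mulNa0]
    rw [h, Submodule.mem_bot] at hm
    have := congrFun hm 1
    simp at this
  · rw [Submodule.eq_bot_iff]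
    intro v hv
    have : v ∈ Submodule.span ℂ ({0} : Set (Fin 3 → ℂ)) := by
      refine Submodule.span_mono ?_ hv
      rintro z ⟨x, hx, y, hy, rfl⟩
      have hx0 : x 0 = 0 := sqSpan_b_le hx
      have hy0 : y 0 = 0 := sqSpan_b_le hy
      simp only [Set.mem_singleton_iff]
      funext i; fin_cases i <;> simp [mulNb0, hx0, hy0]
    simpa using this
  · rintro ⟨f, hf⟩
    have h1 : f ![1,0,0] 0 = 0 := by
      have := hf ![1,0,0] ![0,0,1]
      have hm : mulNa0 ![1,0,0] ![0,0,1] = ![1,0,0] := by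
        funext i; fin_cases i <;> simp [mulNa0]
      rw [hm] at this
      have := congrFun this 0
      simpa [mulNb0] using this
    have h2 : f ![0,1,0] = 0 := by
      have := hf ![1,0,0] ![1,0,0]
      have hm : mulNa0 ![1,0,0] ![1,0,0] = ![0,1,0] := by
        funext i; fin_cases i <;> simp [mulNa0]
      rw [hm] at this
      rw [this]
      funext i; fin_cases i <;> simp [mulNb0, h1]
    have := f.injective (by rw [h2, map_zero] : f ![0,1,0] = f 0)
    have := congrFun this 1
    simp at this
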